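/- arXiv:0801.0874 — 2 statements merged into one kernel-verified Lean document; each statement's English description precedes it below -/
import Mathlib

section
/- For every signed composition μ of n, G_μ is the internal semidirect product T_μ ⋊ S_{μ^+}: T_μ is a normal subgroup of G_μ, T_μ ∩ S_{μ^+} = {1}, and every element of G_μ can be written uniquely as t·w with t ∈ T_μ and w ∈ S_{μ^+}. -/
open Equiv SemidirectProduct

namespace CycSol

/-- The action of the symmetric group on the "torus" `(ℤ/r)^n` by permuting coordinates. -/
def act (r n : ℕ) : Equiv.Perm (Fin n) →* MulAut (Multiplicative (Fin n → ZMod r)) where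
  toFun w :=
    { toFun := fun f => Multiplicative.ofAdd fun i => Multiplicative.toAdd f (w⁻¹ i)
      invFun := fun f => Multiplicative.ofAdd fun i => Multiplicative.toAdd f (w i)
      left_inv := fun f => by
        show Multiplicative.ofAdd (fun i => Multiplicative.toAdd f (w⁻¹ (w i))) = f
        simp
      right_inv := fun f => by
        show Multiplicative.ofAdd (fun i => Multiplicative.toAdd f (w (w⁻¹ i))) = f
        simp
      map_mul' := fun f g => rfl }
  map_one' := by
    ext f : 1
    show Multiplicative.ofAdd (fun i => Multiplicative.toAdd f ((1 : Equiv.Perm (Fin n))⁻¹ i)) = f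
    simp
  map_mul' := fun u v => by
    ext f : 1
    show Multiplicative.ofAdd (fun i => Multiplicative.toAdd f ((u * v)⁻¹ i)) = _
    simp [Equiv.Perm.mul_apply, mul_inv_rev]

/-- The wreath product `(ℤ/r) ≀ S_n`, i.e. the complex reflection group `G(r,1,n)`. -/
abbrev Grn (r n : ℕ) :=
  SemidirectProduct (Multiplicative (Fin n → ZMod r)) (Equiv.Perm (Fin n)) (act r n)

/-- The generator `t_i`. -/
def tGen (r n : ℕ) (i : Fin n) : Grn r n :=
  inl (Multiplicative.ofAdd (Pi.single i 1))

/-- `sGen i j` is the transposition `(i,j)`, viewed inside `G(r,1,n)`. -/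
def sGen (r n : ℕ) (i j : Fin n) : Grn r n := inr (Equiv.swap i j)

/-- `t^α` for a vector `α ∈ {0,…,r-1}^n`. -/
def tPow (r n : ℕ) (α : Fin n → Fin r) : Grn r n :=
  inl (Multiplicative.ofAdd fun i => ((α i : ℕ) : ZMod r))

/-- The generating set `Π = {t_1,…,t_n, s_1,…,s_{n-1}}`. -/
def PiSet (r n : ℕ) : Set (Grn r n) :=
  {g | (∃ i : Fin n, g = tGen r n i) ∨
       (∃ i j : Fin n, (j : ℕ) = (i : ℕ) + 1 ∧ g = sGen r n i j)}

/-- The `Π`-length of an element of `G(r,1,n)`. -/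
noncomputable def len (r n : ℕ) (g : Grn r n) : ℕ :=
  sInf {k | ∃ l : List (Grn r n), l.length = k ∧ (∀ x ∈ l, x ∈ PiSet r n) ∧ l.prod = g}

/-- A signed composition of `n`: a list of nonzero integers whose absolute values sum to `n`. -/
def IsSignedComp (n : ℕ) (μ : List ℤ) : Prop :=
  (∀ x ∈ μ, x ≠ 0) ∧ (μ.map Int.natAbs).sum = n

/-- The type of signed compositions of `n`. -/
abbrev SComp (n : ℕ) := {l : List ℤ // IsSignedComp n l}

/-- `μ̄_i = |μ_1| + ⋯ + |μ_i|`. -/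
def absPrefix (μ : List ℤ) (i : ℕ) : ℕ := ((μ.take i).map Int.natAbs).sum

/-- The subset `Π_μ ⊆ Π` attached to a signed composition `μ` (here `t_j, s_j` are indexed by
`j : Fin n`, i.e. `0`-based). -/
def PiMu (r n : ℕ) (μ : List ℤ) : Set (Grn r n) :=
  {g | (∃ j : Fin n, (∃ i, i < μ.length ∧ 0 < μ.getD i 0 ∧
          absPrefix μ i ≤ (j : ℕ) ∧ (j : ℕ) < absPrefix μ (i + 1)) ∧ g = tGen r n j) ∨
       (∃ j k : Fin n, (k : ℕ) = (j : ℕ) + 1 ∧ (∃ i, i < μ.length ∧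
          absPrefix μ i ≤ (j : ℕ) ∧ (k : ℕ) < absPrefix μ (i + 1)) ∧ g = sGen r n j k)}

/-- The reflection subgroup `G_μ = ⟨Π_μ⟩`. -/
def Gmu (r n : ℕ) (μ : List ℤ) : Subgroup (Grn r n) := Subgroup.closure (PiMu r n μ)

/-- The subgroup `T = (ℤ/r)^n` of `G(r,1,n)`. -/
def Tsub (r n : ℕ) : Subgroup (Grn r n) :=
  (inl : Multiplicative (Fin n → ZMod r) →* Grn r n).range

/-- The subgroup `S_n` of `G(r,1,n)`. -/
def Ssub (r n : ℕ) : Subgroup (Grn r n) :=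
  (inr : Equiv.Perm (Fin n) →* Grn r n).range

/-- `T_{-μ}`: the subgroup of `T` generated by those `t_i` not lying in `G_μ`. -/
def Tneg (r n : ℕ) (μ : List ℤ) : Subgroup (Grn r n) :=
  Subgroup.closure {g | ∃ i : Fin n, tGen r n i ∉ Gmu r n μ ∧ g = tGen r n i}

/-- The Young subgroup `S_{μ^+} = G_μ ∩ S_n`, as a subgroup of `S_n`. -/
def youngS (r n : ℕ) (μ : List ℤ) : Subgroup (Equiv.Perm (Fin n)) :=
  (Gmu r n μ).comap (inr : Equiv.Perm (Fin n) →* Grn r n)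

/-- `𝒟_{μ^+}`: the permutations of minimal (Coxeter = `Π`-) length in their right coset
`S_{μ^+} w`. -/
noncomputable def Dset (r n : ℕ) (μ : List ℤ) : Set (Equiv.Perm (Fin n)) :=
  {d | ∀ w : Equiv.Perm (Fin n), w * d⁻¹ ∈ youngS r n μ →
        len r n (inr d) ≤ len r n (inr w)}

/-- `𝒟_{μ^+ν^+} = 𝒟_{μ^+} ∩ 𝒟_{ν^+}^{-1}`. -/
noncomputable def DD (r n : ℕ) (μ ν : List ℤ) : Set (Equiv.Perm (Fin n)) :=
  Dset r n μ ∩ {d | d⁻¹ ∈ Dset r n ν}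

/-- `𝓔_μ`: the elements of minimal `Π`-length in their right coset `G_μ e`. -/
noncomputable def Ecal (r n : ℕ) (μ : List ℤ) : Set (Grn r n) :=
  {e | ∀ g : Grn r n, g * e⁻¹ ∈ Gmu r n μ → len r n e ≤ len r n g}

/-- `E_μ = Σ_{e ∈ 𝓔_μ} e` in the group algebra `R G(r,1,n)`. -/
noncomputable def Emu (R : Type) [CommRing R] (r n : ℕ) (μ : List ℤ) :
    MonoidAlgebra R (Grn r n) :=
  ∑ᶠ e ∈ Ecal r n μ, MonoidAlgebra.of R (Grn r n) e

/-- The generating set `{E_μ : μ a signed composition of n}` of the cyclotomic Solomon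
algebra. -/
def SolSet (R : Type) [CommRing R] (r n : ℕ) : Set (MonoidAlgebra R (Grn r n)) :=
  {x | ∃ μ : List ℤ, IsSignedComp n μ ∧ x = Emu R r n μ}

/-- The cyclotomic Solomon algebra `Sol(G(r,1,n))`. -/
noncomputable def Sol (R : Type) [CommRing R] (r n : ℕ) :
    Subalgebra R (MonoidAlgebra R (Grn r n)) :=
  Algebra.adjoin R (SolSet R r n)

/-! The projection `g ↦ inr g.right` of `G(r,1,n)` onto `S_n` sends each `t_i` to `1` and fixes
each `s_i`, so it maps `G_μ = ⟨Π_μ⟩` into itself. Hence the `T`- and `S_n`-components of any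
`g ∈ G_μ`, namely `g * (inr g.right)⁻¹` and `inr g.right`, lie in `G_μ`, and the unique
factorisation of the ambient semidirect product restricts to `G_μ`. -/

namespace SemidirectProduct

variable {N G : Type*} [Group N] [Group G] {φ : G →* MulAut N}

theorem range_inl_inf_range_inr :
    (inl : N →* N ⋊[φ] G).range ⊓ (inr : G →* N ⋊[φ] G).range = ⊥ := by
  rw [eq_bot_iff]
  rintro _ ⟨⟨n, hn⟩, g, rfl⟩
  have hg : g = 1 := by simpa using (congrArg right hn).symm
  simp [hg]

theorem inl_mul_inr_eq_iff {x : N ⋊[φ] G} {n : N} {g : G} :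
    inl n * inr g = x ↔ n = x.left ∧ g = x.right := by
  constructor
  · rintro rfl
    simp
  · rintro ⟨rfl, rfl⟩
    exact inl_left_mul_inr_right x

theorem inr_right_mem_closure {S : Set (N ⋊[φ] G)}
    (hS : ∀ s ∈ S, inr s.right ∈ Subgroup.closure S) {x : N ⋊[φ] G}
    (hx : x ∈ Subgroup.closure S) : inr x.right ∈ Subgroup.closure S := by
  induction hx using Subgroup.closure_induction with
  | mem s hs => exact hS s hs
  | one => simp
  | mul x y _ _ hx hy => simpa using mul_mem hx hy
  | inv x _ hx => simpa using inv_mem hx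

variable (H : Subgroup (N ⋊[φ] G))

theorem conj_mem_inf_range_inl {t g : N ⋊[φ] G} (ht : t ∈ H ⊓ inl.range) (hg : g ∈ H) :
    g * t * g⁻¹ ∈ H ⊓ inl.range := by
  rw [range_inl_eq_ker_rightHom] at ht ⊢
  exact ⟨H.mul_mem (H.mul_mem hg ht.1) (H.inv_mem hg), rightHom.normal_ker.conj_mem t ht.2 g⟩

theorem existsUnique_inf_range_inl_mul_inf_range_inr (hH : ∀ x ∈ H, inr x.right ∈ H)
    {x : N ⋊[φ] G} (hx : x ∈ H) :
    ∃! p : (N ⋊[φ] G) × (N ⋊[φ] G),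
      p.1 ∈ H ⊓ inl.range ∧ p.2 ∈ H ⊓ inr.range ∧ x = p.1 * p.2 := by
  have hleft : inl x.left = x * (inr x.right)⁻¹ :=
    eq_mul_inv_of_mul_eq (inl_left_mul_inr_right x)
  refine ⟨(x * (inr x.right)⁻¹, inr x.right),
    ⟨⟨H.mul_mem hx (H.inv_mem (hH x hx)), x.left, hleft⟩, ⟨hH x hx, x.right, rfl⟩, by group⟩, ?_⟩
  rintro ⟨_, _⟩ ⟨⟨-, n, rfl⟩, ⟨-, g, rfl⟩, hx_eq⟩
  obtain ⟨rfl, rfl⟩ := inl_mul_inr_eq_iff.1 hx_eq.symm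
  exact Prod.ext hleft rfl

end SemidirectProduct

theorem inr_right_mem_Gmu (r n : ℕ) (μ : List ℤ) {g : Grn r n} (hg : g ∈ Gmu r n μ) :
    inr g.right ∈ Gmu r n μ := by
  refine SemidirectProduct.inr_right_mem_closure ?_ hg
  rintro _ (⟨j, -, rfl⟩ | ⟨j, k, hjk, hblock, rfl⟩)
  · exact (Gmu r n μ).one_mem
  · exact Subgroup.subset_closure (Or.inr ⟨j, k, hjk, hblock, rfl⟩)

theorem stmt2_general (r n : ℕ) (μ : List ℤ) :
    (∀ t ∈ Gmu r n μ ⊓ Tsub r n, ∀ g ∈ Gmu r n μ, g * t * g⁻¹ ∈ Gmu r n μ ⊓ Tsub r n) ∧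
    (Gmu r n μ ⊓ Tsub r n) ⊓ (Gmu r n μ ⊓ Ssub r n) = ⊥ ∧
    (∀ g ∈ Gmu r n μ, ∃! p : Grn r n × Grn r n,
        p.1 ∈ Gmu r n μ ⊓ Tsub r n ∧ p.2 ∈ Gmu r n μ ⊓ Ssub r n ∧ g = p.1 * p.2) := by
  refine ⟨fun t ht g hg => SemidirectProduct.conj_mem_inf_range_inl _ ht hg, ?_,
    fun g hg => SemidirectProduct.existsUnique_inf_range_inl_mul_inf_range_inr _
      (fun _ => inr_right_mem_Gmu r n μ) hg⟩
  rw [eq_bot_iff, ← SemidirectProduct.range_inl_inf_range_inr]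
  exact inf_le_inf inf_le_right inf_le_right

theorem stmt2 (r n : ℕ) (hr : 2 ≤ r) (hn : 1 ≤ n) (μ : List ℤ) (hμ : IsSignedComp n μ) :
    (∀ t ∈ Gmu r n μ ⊓ Tsub r n, ∀ g ∈ Gmu r n μ, g * t * g⁻¹ ∈ Gmu r n μ ⊓ Tsub r n) ∧
    (Gmu r n μ ⊓ Tsub r n) ⊓ (Gmu r n μ ⊓ Ssub r n) = ⊥ ∧
    (∀ g ∈ Gmu r n μ, ∃! p : Grn r n × Grn r n,
        p.1 ∈ Gmu r n μ ⊓ Tsub r n ∧ p.2 ∈ Gmu r n μ ⊓ Ssub r n ∧ g = p.1 * p.2) :=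
  stmt2_general r n μ

end CycSol
end

section
/- For signed compositions μ, ν of n and d ∈ 𝒟_{μ^+ν^+}, the number of elements of the form t^α d (with α ∈ {0,…,r−1}^n) which have minimal Π-length in their (G_μ, G_ν)-double coset equals |T_{−μ} ∩ d T_{−ν} d^{−1}|, and this cardinality equals r^{N(d)} where N(d) = #{ i ∈ {1,…,n} : t_i ∉ G_μ and t_{i^d} ∉ G_ν }. -/
open Equiv SemidirectProduct

namespace CycSol

/-!
The `Π`-length of `t^f w` (with `f ∈ (ℤ/r)^n`, `w ∈ S_n`) is `∑ i, (f i).val + inv(w)`: torus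
weight plus the number of inversions. In the double coset `G_μ t^α d G_ν`, a coordinate `α_i` can be
cleared by a power of `t_i` on the left when `t_i ∈ G_μ`, or of `t_{d⁻¹ i}` on the right when that
lies in `G_ν`; so a minimal `t^α d` is supported on `N = {i | t_i ∉ G_μ, t_{d⁻¹ i} ∉ G_ν}`.
Conversely, multiplying by `G_μ` and `G_ν` leaves the coordinates in `N` untouched (up to
relabelling), and `d ∈ 𝒟_{μ^+ν^+}` has minimal length in its `(S_{μ^+}, S_{ν^+})`-double coset
because each of its inversions survives in `u d v`. Hence both the minimal elements and
`T_{-μ} ∩ d T_{-ν} d⁻¹ = (ℤ/r)^N` number `r^{|N|}`.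
-/

section Basic

variable {r n : ℕ}

@[simp]
lemma toAdd_act_apply (w : Perm (Fin n)) (f : Multiplicative (Fin n → ZMod r)) (i : Fin n) :
    Multiplicative.toAdd (act r n w f) i = Multiplicative.toAdd f (w⁻¹ i) := rfl

lemma act_ofAdd_single (w : Perm (Fin n)) (i : Fin n) (c : ZMod r) :
    act r n w (Multiplicative.ofAdd (Pi.single i c)) =
      Multiplicative.ofAdd (Pi.single (w i) c) := by
  ext j
  simp only [toAdd_act_apply, toAdd_ofAdd, Pi.single_apply, Perm.coe_inv, eq_symm_apply, eq_comm]

lemma inr_mul_inl (w : Perm (Fin n)) (m : Multiplicative (Fin n → ZMod r)) :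
    (inr w : Grn r n) * inl m = inl (act r n w m) * inr w := by
  rw [inl_aut, map_inv, inv_mul_cancel_right]

lemma inv_inr_mul_tGen_mul_inr (w : Perm (Fin n)) (i : Fin n) :
    (inr w : Grn r n)⁻¹ * tGen r n i * inr w = tGen r n (w⁻¹ i) := by
  rw [← map_inv, tGen, inr_mul_inl, mul_assoc, ← map_mul, inv_mul_cancel, map_one, mul_one,
    act_ofAdd_single, tGen]

lemma tGen_pow (i : Fin n) (m : ℕ) :
    tGen r n i ^ m = inl (Multiplicative.ofAdd (Pi.single i (m : ZMod r))) := by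
  rw [tGen, ← map_pow, ← ofAdd_nsmul, ← Pi.single_smul, nsmul_one]

lemma eq_inl_of_right_eq_one {g : Grn r n} (h : g.right = 1) : g = inl g.left := by
  conv_lhs => rw [← inl_left_mul_inr_right g, h, map_one, mul_one]

lemma single_mem_of_tGen_mem [NeZero r] {H : Subgroup (Grn r n)} {i : Fin n}
    (h : tGen r n i ∈ H) (c : ZMod r) : inl (Multiplicative.ofAdd (Pi.single i c)) ∈ H := by
  rw [← ZMod.natCast_zmod_val c, ← tGen_pow]
  exact H.pow_mem h _

lemma natCast_val_eq_zero_iff [NeZero r] (x : Fin r) : ((x : ℕ) : ZMod r) = 0 ↔ x = 0 := by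
  rw [← ZMod.val_eq_zero, ZMod.val_cast_of_lt x.isLt, Fin.val_eq_zero_iff]

end Basic

section Inversions

variable {n : ℕ}

def inversions (w : Perm (Fin n)) : Finset (Fin n × Fin n) :=
  Finset.univ.filter fun p => p.1 < p.2 ∧ w p.2 < w p.1

def invCount (w : Perm (Fin n)) : ℕ := (inversions w).card

@[simp]
lemma mem_inversions {w : Perm (Fin n)} {p : Fin n × Fin n} :
    p ∈ inversions w ↔ p.1 < p.2 ∧ w p.2 < w p.1 := by
  simp [inversions]

@[simp]
lemma invCount_one : invCount (1 : Perm (Fin n)) = 0 := by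
  simp only [invCount, Finset.card_eq_zero, Finset.eq_empty_iff_forall_notMem, mem_inversions,
    Perm.one_apply]
  exact fun p h => h.1.asymm h.2

lemma swap_lt_swap_iff {j k x y : Fin n} (hk : (k : ℕ) = j + 1) (hjk : ¬(x = j ∧ y = k))
    (hkj : ¬(x = k ∧ y = j)) : swap j k x < swap j k y ↔ x < y := by
  simp only [swap_apply_def, Fin.lt_def, Fin.ext_iff] at *
  split_ifs <;> omega

lemma inversions_swap_mul {w : Perm (Fin n)} {j k : Fin n} (hk : (k : ℕ) = j + 1)
    (h : w⁻¹ k < w⁻¹ j) : inversions (swap j k * w) = (inversions w).erase (w⁻¹ k, w⁻¹ j) := by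
  ext ⟨a, b⟩
  simp only [Finset.mem_erase, mem_inversions, Perm.mul_apply, ne_eq, Prod.mk.injEq,
    Perm.eq_inv_iff_eq]
  by_cases hp : w a = k ∧ w b = j
  · have hkj : ¬k < j := by simp [Fin.lt_def, hk]
    simp [hp, hkj]
  · by_cases hab : a < b
    · have hkj : ¬(w b = k ∧ w a = j) := by
        rintro ⟨hb, ha⟩
        rw [← hb, ← ha] at h
        simp only [Perm.coe_inv, symm_apply_apply] at h
        exact hab.asymm h
      rw [swap_lt_swap_iff hk (by tauto) hkj]
      tauto
    · tauto

lemma invCount_swap_mul_add_one {w : Perm (Fin n)} {j k : Fin n} (hk : (k : ℕ) = j + 1)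
    (h : w⁻¹ k < w⁻¹ j) : invCount (swap j k * w) + 1 = invCount w := by
  have hjk : j < k := by simp [Fin.lt_def, hk]
  rw [invCount, inversions_swap_mul hk h, Finset.card_erase_add_one (by simpa using ⟨h, hjk⟩),
    invCount]

lemma invCount_swap_mul_le {w : Perm (Fin n)} {j k : Fin n} (hk : (k : ℕ) = j + 1) :
    invCount (swap j k * w) ≤ invCount w + 1 := by
  have hjk : w⁻¹ j ≠ w⁻¹ k := fun h => by simpa [Fin.ext_iff, hk] using w⁻¹.injective h
  rcases hjk.lt_or_gt with h | h
  · have := invCount_swap_mul_add_one (w := swap j k * w) hk (by simpa [swap_inv] using h)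
    rw [← mul_assoc, swap_mul_self, one_mul] at this
    omega
  · have := invCount_swap_mul_add_one hk h
    omega

end Inversions

section Descent

variable {n : ℕ}

lemma strictMonoOn_of_lt_adjacent {α : Type*} [Preorder α] {s : Set (Fin n)}
    (hs : s.OrdConnected) {f : Fin n → α}
    (h : ∀ j k : Fin n, (k : ℕ) = j + 1 → j ∈ s → k ∈ s → f j < f k) : StrictMonoOn f s := by
  refine strictMonoOn_of_lt_succ hs fun a ha has hsa => h _ _ ?_ has hsa
  obtain ⟨b, hab⟩ := not_isMax_iff.1 ha
  have h1 := Order.lt_succ_of_not_isMax ha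
  have h2 : Order.succ a ≤ ⟨a + 1, by omega⟩ := Order.succ_le_of_lt (by simp [Fin.lt_def])
  simp only [Fin.lt_def, Fin.le_def] at h1 h2
  omega

lemma exists_adjacent_descent {w : Perm (Fin n)} (hw : w ≠ 1) :
    ∃ j k : Fin n, (k : ℕ) = j + 1 ∧ w k < w j := by
  by_contra! hasc
  have hmono : StrictMono w := by
    refine strictMonoOn_univ.1 (strictMonoOn_of_lt_adjacent Set.ordConnected_univ ?_)
    intro j k hk _ _
    refine (hasc j k hk).lt_of_ne fun hjk => ?_
    simp [w.injective.eq_iff, Fin.ext_iff, hk] at hjk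
  refine hw (Perm.ext fun i => ?_)
  exact congrArg (· i) (Subsingleton.elim (hmono.orderIsoOfSurjective w w.surjective)
    (OrderIso.refl _))

end Descent

section Length

variable {r n : ℕ}

def weight (f : Multiplicative (Fin n → ZMod r)) : ℕ := ∑ i, (Multiplicative.toAdd f i).val

lemma weight_mul_le (f g : Multiplicative (Fin n → ZMod r)) :
    weight (f * g) ≤ weight f + weight g := by
  simp only [weight]
  rw [← Finset.sum_add_distrib]
  exact Finset.sum_le_sum fun i _ => ZMod.val_add_le _ _

lemma weight_act (w : Perm (Fin n)) (f : Multiplicative (Fin n → ZMod r)) :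
    weight (act r n w f) = weight f :=
  Equiv.sum_comp w⁻¹ fun i => (Multiplicative.toAdd f i).val

lemma weight_ofAdd_single (i : Fin n) (c : ZMod r) :
    weight (Multiplicative.ofAdd (Pi.single i c)) = c.val := by
  rw [weight, Finset.sum_eq_single i (fun j _ hj => by simp [hj]) (by simp)]
  simp

def torusWord (f : Fin n → ZMod r) : List (Grn r n) :=
  (List.finRange n).flatMap fun i => List.replicate (f i).val (tGen r n i)

lemma prod_torusWord [NeZero r] (f : Fin n → ZMod r) :
    (torusWord f).prod = inl (Multiplicative.ofAdd f) := by
  simp only [torusWord, List.flatMap_def, List.prod_flatten, List.map_map, Function.comp_def,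
    List.prod_replicate, tGen_pow, ZMod.natCast_zmod_val]
  conv_rhs => rw [← Finset.univ_sum_single f, ofAdd_sum, Fin.prod_univ_def, map_list_prod,
    List.map_map]
  rfl

lemma length_torusWord (f : Fin n → ZMod r) :
    (torusWord f).length = weight (Multiplicative.ofAdd f) := by
  simp [torusWord, List.length_flatMap, weight, Fin.sum_univ_def]

lemma mem_torusWord {f : Fin n → ZMod r} {x : Grn r n} (hx : x ∈ torusWord f) :
    ∃ i, f i ≠ 0 ∧ x = tGen r n i := by
  simp only [torusWord, List.mem_flatMap, List.mem_replicate] at hx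
  obtain ⟨i, -, hval, rfl⟩ := hx
  exact ⟨i, fun h => by simp [h] at hval, rfl⟩

lemma tGen_mem_PiSet (i : Fin n) : tGen r n i ∈ PiSet r n := Or.inl ⟨i, rfl⟩

lemma sGen_mem_PiSet {j k : Fin n} (hk : (k : ℕ) = j + 1) : sGen r n j k ∈ PiSet r n :=
  Or.inr ⟨j, k, hk, rfl⟩

def HasWord (r n : ℕ) (g : Grn r n) (k : ℕ) : Prop :=
  ∃ l : List (Grn r n), l.length = k ∧ (∀ x ∈ l, x ∈ PiSet r n) ∧ l.prod = g

lemma len_le_of_hasWord {g : Grn r n} {k : ℕ} (h : HasWord r n g k) : len r n g ≤ k :=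
  Nat.sInf_le h

lemma hasWord_one : HasWord r n 1 0 := ⟨[], rfl, by simp, rfl⟩

lemma HasWord.mul {g h : Grn r n} {k l : ℕ} (hg : HasWord r n g k) (hh : HasWord r n h l) :
    HasWord r n (g * h) (k + l) := by
  obtain ⟨u, rfl, hu, rfl⟩ := hg
  obtain ⟨v, rfl, hv, rfl⟩ := hh
  exact ⟨u ++ v, List.length_append, by simpa [or_imp, forall_and] using ⟨hu, hv⟩,
    List.prod_append⟩

lemma hasWord_inl [NeZero r] (f : Fin n → ZMod r) :
    HasWord r n (inl (Multiplicative.ofAdd f)) (weight (Multiplicative.ofAdd f)) := by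
  refine ⟨torusWord f, length_torusWord f, fun x hx => ?_, prod_torusWord f⟩
  obtain ⟨i, -, rfl⟩ := mem_torusWord hx
  exact tGen_mem_PiSet i

lemma hasWord_inr (w : Perm (Fin n)) : HasWord r n (inr w) (invCount w) := by
  induction hN : invCount w using Nat.strong_induction_on generalizing w with
  | _ N ih =>
    rcases eq_or_ne w 1 with rfl | hw
    · rw [map_one, ← hN, invCount_one]
      exact hasWord_one
    obtain ⟨j, k, hk, hdesc⟩ := exists_adjacent_descent (inv_ne_one.2 hw)
    have hcount := invCount_swap_mul_add_one hk hdesc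
    have hs : HasWord r n (sGen r n j k) 1 :=
      ⟨[sGen r n j k], rfl, by simpa using sGen_mem_PiSet hk, by simp⟩
    have := hs.mul (ih _ (by omega) (swap j k * w) rfl)
    rwa [sGen, ← map_mul, ← mul_assoc, swap_mul_self, one_mul, add_comm, hcount, hN] at this

lemma weight_add_invCount_le [NeZero r] {g : Grn r n} {k : ℕ} (h : HasWord r n g k) :
    weight g.left + invCount g.right ≤ k := by
  obtain ⟨l, rfl, hl, rfl⟩ := h
  induction l with
  | nil => simp [weight]
  | cons x l ih =>
    simp only [List.mem_cons, forall_eq_or_imp] at hl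
    obtain ⟨⟨i, rfl⟩ | ⟨j, k, hk, rfl⟩, hl⟩ := hl
    · have h1 : (1 : ZMod r).val ≤ 1 := by rw [ZMod.val_one_eq_one_mod]; exact Nat.mod_le _ _
      have h2 := weight_mul_le (Multiplicative.ofAdd (Pi.single i (1 : ZMod r))) (l.prod.left)
      rw [weight_ofAdd_single] at h2
      simp only [List.prod_cons, tGen, mul_left, left_inl, right_inl, map_one, MulAut.one_apply,
        mul_right, one_mul, List.length_cons] at h2 ⊢
      have := ih hl
      omega
    · simp only [List.prod_cons, sGen, mul_left, left_inr, right_inr, one_mul, mul_right,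
        weight_act, List.length_cons]
      have := invCount_swap_mul_le (w := l.prod.right) hk
      have := ih hl
      omega

lemma len_eq [NeZero r] (g : Grn r n) : len r n g = weight g.left + invCount g.right := by
  have hword : HasWord r n g (weight g.left + invCount g.right) := by
    simpa using (hasWord_inl (Multiplicative.toAdd g.left)).mul (hasWord_inr g.right)
  have hlen : HasWord r n g (len r n g) :=
    Nat.sInf_mem (⟨_, hword⟩ : {k | HasWord r n g k}.Nonempty)
  exact le_antisymm (len_le_of_hasWord hword) (weight_add_invCount_le hlen)

end Length

section Blocks

variable {n : ℕ} {μ : List ℤ}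

lemma absPrefix_mono (μ : List ℤ) : Monotone (absPrefix μ) := fun _ _ h =>
  (((List.take_prefix_take_left h).map _).sublist).sum_le_sum fun _ _ => Nat.zero_le _

lemma absPrefix_of_length_le (hμ : (μ.map Int.natAbs).sum = n) {i : ℕ} (hi : μ.length ≤ i) :
    absPrefix μ i = n := by
  rw [absPrefix, List.take_of_length_le hi, hμ]

/-- The (0-based) index of the block of `μ` containing position `j`. -/
noncomputable def blockIdx (μ : List ℤ) (j : ℕ) : ℕ := sInf {i | j < absPrefix μ (i + 1)}

lemma blockIdx_eq_of {i j : ℕ} (h₁ : absPrefix μ i ≤ j) (h₂ : j < absPrefix μ (i + 1)) :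
    blockIdx μ j = i := by
  refine le_antisymm (Nat.sInf_le h₂) (not_lt.1 fun hlt => ?_)
  have hmem : j < absPrefix μ (blockIdx μ j + 1) :=
    Nat.sInf_mem (s := {i | j < absPrefix μ (i + 1)}) ⟨i, h₂⟩
  exact (hmem.trans_le (absPrefix_mono μ hlt)).not_ge h₁

lemma lt_absPrefix_blockIdx_succ (hμ : (μ.map Int.natAbs).sum = n) {j : ℕ} (hj : j < n) :
    j < absPrefix μ (blockIdx μ j + 1) :=
  Nat.sInf_mem (s := {i | j < absPrefix μ (i + 1)})
    ⟨μ.length, show j < _ by rwa [absPrefix_of_length_le hμ (by omega)]⟩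

lemma absPrefix_blockIdx_le (μ : List ℤ) (j : ℕ) : absPrefix μ (blockIdx μ j) ≤ j := by
  rcases h : blockIdx μ j with _ | m
  · simp [absPrefix]
  · exact not_lt.1 (Nat.notMem_of_lt_sInf (s := {i | j < absPrefix μ (i + 1)})
      (show m < blockIdx μ j by omega))

lemma blockIdx_lt_length (hμ : (μ.map Int.natAbs).sum = n) {j : ℕ} (hj : j < n) :
    blockIdx μ j < μ.length := by
  by_contra! h
  have := absPrefix_blockIdx_le μ j
  rw [absPrefix_of_length_le hμ h] at this
  omega

lemma blockIdx_mono (hμ : (μ.map Int.natAbs).sum = n) :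
    Monotone fun j : Fin n => blockIdx μ j :=
  fun _ j' h => Nat.sInf_le ((Fin.le_def.1 h).trans_lt (lt_absPrefix_blockIdx_succ hμ j'.isLt))

def InPosBlock (μ : List ℤ) (j : ℕ) : Prop := 0 < μ.getD (blockIdx μ j) 0

/-- For `β = blockIdx μ`, the Young subgroup `S_{μ^+}`. -/
def fiberPerms (β : Fin n → ℕ) : Subgroup (Perm (Fin n)) where
  carrier := {u | ∀ j, β (u j) = β j}
  one_mem' _ := rfl
  mul_mem' hu hv j := (hu _).trans (hv j)
  inv_mem' {u} hu j := by simpa using (hu (u⁻¹ j)).symm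

end Blocks

section Subgroups

variable {r n : ℕ} {μ : List ℤ}

/-- `(ℤ/r)^S ⋊ W` inside `G(r,1,n)`, for a `W`-stable set of positions `S`. -/
def supportedSubgroup (S : Set (Fin n)) (W : Subgroup (Perm (Fin n)))
    (hW : ∀ u ∈ W, ∀ i, u i ∈ S ↔ i ∈ S) : Subgroup (Grn r n) where
  carrier := {g | g.right ∈ W ∧ ∀ i ∉ S, Multiplicative.toAdd g.left i = 0}
  one_mem' := ⟨W.one_mem, fun _ _ => rfl⟩
  mul_mem' := by
    rintro a b ⟨ha, ha'⟩ ⟨hb, hb'⟩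
    refine ⟨W.mul_mem ha hb, fun i hi => ?_⟩
    have hi' : a.right⁻¹ i ∉ S := by rwa [hW _ (W.inv_mem ha)]
    show Multiplicative.toAdd a.left i + Multiplicative.toAdd b.left (a.right⁻¹ i) = 0
    rw [ha' i hi, hb' _ hi', add_zero]
  inv_mem' := by
    rintro a ⟨ha, ha'⟩
    refine ⟨W.inv_mem ha, fun i hi => ?_⟩
    show -Multiplicative.toAdd a.left (a.right i) = 0
    rw [ha' _ (by rwa [hW _ ha]), neg_zero]

lemma mem_supportedSubgroup {S : Set (Fin n)} {W : Subgroup (Perm (Fin n))}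
    {hW : ∀ u ∈ W, ∀ i, u i ∈ S ↔ i ∈ S} {g : Grn r n} :
    g ∈ supportedSubgroup S W hW ↔ g.right ∈ W ∧ ∀ i ∉ S, Multiplicative.toAdd g.left i = 0 :=
  Iff.rfl

/-- `(ℤ/r)^P ⋊ S_{μ^+}`, where `P` is the set of positions in the positive blocks of `μ`. -/
noncomputable def blockSubgroup (r n : ℕ) (μ : List ℤ) : Subgroup (Grn r n) :=
  supportedSubgroup {i | InPosBlock μ i} (fiberPerms fun j => blockIdx μ j)
    fun _ hu i => by simp [InPosBlock, hu i]

lemma tGen_mem_Gmu (hμ : (μ.map Int.natAbs).sum = n) {j : Fin n} (hj : InPosBlock μ j) :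
    tGen r n j ∈ Gmu r n μ :=
  Subgroup.subset_closure <| Or.inl ⟨j, ⟨blockIdx μ j, blockIdx_lt_length hμ j.isLt, hj,
    absPrefix_blockIdx_le μ j, lt_absPrefix_blockIdx_succ hμ j.isLt⟩, rfl⟩

lemma sGen_mem_Gmu (hμ : (μ.map Int.natAbs).sum = n) {j k : Fin n} (hk : (k : ℕ) = j + 1)
    (hjk : blockIdx μ j = blockIdx μ k) : sGen r n j k ∈ Gmu r n μ :=
  Subgroup.subset_closure <| Or.inr ⟨j, k, hk, ⟨blockIdx μ j, blockIdx_lt_length hμ j.isLt,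
    absPrefix_blockIdx_le μ j, hjk ▸ lt_absPrefix_blockIdx_succ hμ k.isLt⟩, rfl⟩

lemma Gmu_le_blockSubgroup : Gmu r n μ ≤ blockSubgroup r n μ := by
  rw [Gmu, Subgroup.closure_le]
  rintro _ (⟨j, ⟨i, -, hpos, h₁, h₂⟩, rfl⟩ | ⟨j, k, hk, ⟨i, -, h₁, h₂⟩, rfl⟩)
  · refine ⟨(fiberPerms _).one_mem, fun x hx => ?_⟩
    have hxj : x ≠ j := by
      rintro rfl
      exact hx (show InPosBlock μ x by rwa [InPosBlock, blockIdx_eq_of h₁ h₂])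
    exact Pi.single_eq_of_ne hxj _
  · refine ⟨fun x => ?_, fun _ _ => rfl⟩
    have hj : blockIdx μ j = i := blockIdx_eq_of h₁ (by omega)
    have hk : blockIdx μ k = i := blockIdx_eq_of (by omega) h₂
    simp only [sGen, right_inr, swap_apply_def]
    split_ifs <;> simp_all

lemma tGen_mem_Gmu_iff [Nontrivial (ZMod r)] (hμ : (μ.map Int.natAbs).sum = n) {j : Fin n} :
    tGen r n j ∈ Gmu r n μ ↔ InPosBlock μ j := by
  refine ⟨fun h => not_not.1 fun hj => ?_, tGen_mem_Gmu hμ⟩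
  have := (Gmu_le_blockSubgroup h).2 j hj
  simp [tGen] at this

end Subgroups

section DoubleCosetReps

variable {r n : ℕ} {μ : List ℤ}

/-- A descent of `d⁻¹` at adjacent positions `j, j+1` of one block would make `(j, j+1) * d` a
shorter element of the coset `S_{μ^+} d`. -/
lemma strictMonoOn_inv_of_mem_Dset [NeZero r] (hμ : (μ.map Int.natAbs).sum = n)
    {d : Perm (Fin n)} (hd : d ∈ Dset r n μ) (c : ℕ) :
    StrictMonoOn ⇑(d⁻¹) ((fun j : Fin n => blockIdx μ j) ⁻¹' {c}) := by
  refine strictMonoOn_of_lt_adjacent ((Set.ordConnected_singleton).preimage_mono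
    (blockIdx_mono hμ)) fun j k hk hj hk' => ?_
  have hne : d⁻¹ j ≠ d⁻¹ k := fun h => by simpa [Fin.ext_iff, hk] using d⁻¹.injective h
  refine (lt_or_gt_of_ne hne).resolve_right fun hdesc => ?_
  have hyoung : swap j k * d * d⁻¹ ∈ youngS r n μ := by
    rw [mul_inv_cancel_right]
    exact sGen_mem_Gmu hμ hk (hj.trans hk'.symm)
  have := hd _ hyoung
  rw [len_eq, len_eq] at this
  have := invCount_swap_mul_add_one hk hdesc
  simp only [left_inr, right_inr] at *
  omega

/-- Every inversion `(a, b)` of `d` joins different `γ`-fibres and is sent by `d` to different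
`β`-fibres, so it survives as the inversion `(v⁻¹ a, v⁻¹ b)` of `u * d * v`. -/
lemma invCount_le_invCount_mul_mul {β γ : Fin n → ℕ} (hβ : Monotone β) (hγ : Monotone γ)
    {d : Perm (Fin n)} (hdβ : ∀ c, StrictMonoOn ⇑(d⁻¹) (β ⁻¹' {c}))
    (hdγ : ∀ c, StrictMonoOn d (γ ⁻¹' {c})) {u v : Perm (Fin n)} (hu : u ∈ fiberPerms β)
    (hv : v ∈ fiberPerms γ) : invCount d ≤ invCount (u * d * v) := by
  refine Finset.card_le_card_of_injOn (fun p => (v⁻¹ p.1, v⁻¹ p.2)) (fun ⟨a, b⟩ hab => ?_)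
    fun p _ q _ h => by simpa [Prod.ext_iff] using h
  simp only [Finset.mem_coe, mem_inversions] at hab ⊢
  obtain ⟨hab, hdab⟩ := hab
  have hγab : γ a < γ b := (hγ hab.le).lt_of_ne fun h =>
    hdab.not_gt (hdγ (γ a) rfl h.symm hab)
  have hβab : β (d b) < β (d a) := (hβ hdab.le).lt_of_ne fun h =>
    hab.not_gt (by simpa using hdβ (β (d a)) h rfl hdab)
  have hv' : v⁻¹ ∈ fiberPerms γ := inv_mem hv
  refine ⟨hγ.reflect_lt ?_, hβ.reflect_lt ?_⟩
  · rwa [hv' a, hv' b]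
  · simpa [hu (d a), hu (d b)] using hβab

end DoubleCosetReps

section TorusSubgroups

variable {r n : ℕ}

lemma card_funs_eq_zero_off {ι M : Type*} [Fintype ι] [Zero M] (S : Set ι) :
    Nat.card {f : ι → M // ∀ i ∉ S, f i = 0} = Nat.card M ^ S.ncard := by
  classical
  have hfactor (i : ι) :
      Nat.card {b : M // i ∉ S → b = 0} = if i ∈ S then Nat.card M else 1 := by
    split_ifs with h <;> simp [h]
  rw [Nat.card_congr (Equiv.subtypePiEquivPi (p := fun i (b : M) => i ∉ S → b = 0)), Nat.card_pi]
  simp [hfactor, Finset.prod_ite, Set.ncard_eq_toFinset_card']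

abbrev torusSubgroup (r n : ℕ) (S : Set (Fin n)) : Subgroup (Grn r n) :=
  supportedSubgroup S ⊥ fun u hu _ => by rw [Subgroup.mem_bot.1 hu, Perm.one_apply]

lemma mem_torusSubgroup {S : Set (Fin n)} {g : Grn r n} :
    g ∈ torusSubgroup r n S ↔ g.right = 1 ∧ ∀ i ∉ S, Multiplicative.toAdd g.left i = 0 := by
  rw [mem_supportedSubgroup, Subgroup.mem_bot]

lemma Tneg_eq [NeZero r] [Nontrivial (ZMod r)] {μ : List ℤ} (hμ : (μ.map Int.natAbs).sum = n) :
    Tneg r n μ = torusSubgroup r n {i | ¬InPosBlock μ i} := by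
  refine le_antisymm ((Subgroup.closure_le _).2 ?_) fun g hg => ?_
  · rintro _ ⟨i, hi, rfl⟩
    rw [tGen_mem_Gmu_iff hμ] at hi
    refine mem_torusSubgroup.2 ⟨rfl, fun x hx => Pi.single_eq_of_ne ?_ _⟩
    rintro rfl
    exact hx hi
  · rw [mem_torusSubgroup] at hg
    rw [eq_inl_of_right_eq_one hg.1, ← ofAdd_toAdd g.left, ← prod_torusWord]
    refine Subgroup.list_prod_mem _ fun x hx => ?_
    obtain ⟨i, hi, rfl⟩ := mem_torusWord hx
    refine Subgroup.subset_closure ⟨i, ?_, rfl⟩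
    rw [tGen_mem_Gmu_iff hμ]
    exact fun hpos => hi (hg.2 i (not_not.2 hpos))

lemma torusSubgroup_map_conj (d : Perm (Fin n)) (S : Set (Fin n)) :
    (torusSubgroup r n S).map (MulAut.conj (inr d : Grn r n)).toMonoidHom =
      torusSubgroup r n {i | d⁻¹ i ∈ S} := by
  ext g
  rw [Subgroup.mem_map_equiv, mem_torusSubgroup, mem_torusSubgroup]
  simp only [MulAut.conj_symm_apply, mul_left, mul_right, left_inr, right_inr, inv_left,
    inv_right, inv_one, map_one, one_mul, mul_one, toAdd_act_apply, inv_inv]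
  refine and_congr (by rw [mul_assoc, inv_mul_eq_one, eq_comm, mul_eq_right])
    ⟨fun h i hi => by simpa using h (d⁻¹ i) hi, fun h i hi => h _ (by simpa using hi)⟩

lemma torusSubgroup_inf (S T : Set (Fin n)) :
    torusSubgroup r n S ⊓ torusSubgroup r n T = torusSubgroup r n (S ∩ T) := by
  ext g
  simp only [Subgroup.mem_inf, mem_torusSubgroup, Set.mem_inter_iff, not_and_or]
  constructor
  · rintro ⟨⟨h, hS⟩, -, hT⟩
    exact ⟨h, fun i hi => hi.elim (hS i) (hT i)⟩
  · rintro ⟨h, hST⟩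
    exact ⟨⟨h, fun i hi => hST i (Or.inl hi)⟩, h, fun i hi => hST i (Or.inr hi)⟩

lemma card_torusSubgroup [NeZero r] (S : Set (Fin n)) :
    Nat.card (torusSubgroup r n S) = r ^ S.ncard := by
  let e : torusSubgroup r n S ≃ {f : Fin n → ZMod r // ∀ i ∉ S, f i = 0} :=
    { toFun := fun g => ⟨Multiplicative.toAdd g.1.left, (mem_torusSubgroup.1 g.2).2⟩
      invFun := fun f => ⟨inl (Multiplicative.ofAdd f.1), mem_torusSubgroup.2 ⟨rfl, f.2⟩⟩
      left_inv := fun g => Subtype.ext (eq_inl_of_right_eq_one (mem_torusSubgroup.1 g.2).1).symm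
      right_inv := fun _ => rfl }
  rw [Nat.card_congr e, card_funs_eq_zero_off, Nat.card_zmod]

end TorusSubgroups

section MinimalElements

variable {r n : ℕ} {μ ν : List ℤ} {d : Perm (Fin n)}

lemma weight_update_zero_add (f : Fin n → ZMod r) (i : Fin n) :
    weight (Multiplicative.ofAdd (Function.update f i 0)) + (f i).val =
      weight (Multiplicative.ofAdd f) := by
  simp only [weight, toAdd_ofAdd]
  rw [← Finset.add_sum_erase _ _ (Finset.mem_univ i),
    ← Finset.add_sum_erase _ _ (Finset.mem_univ i), Function.update_self, ZMod.val_zero, zero_add,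
    add_comm]
  congr 1
  exact Finset.sum_congr rfl fun j hj => by rw [Function.update_of_ne (Finset.ne_of_mem_erase hj)]

lemma len_inl_mul_inr [NeZero r] (f : Fin n → ZMod r) (w : Perm (Fin n)) :
    len r n (inl (Multiplicative.ofAdd f) * inr w) =
      weight (Multiplicative.ofAdd f) + invCount w := by
  simp [len_eq]

/-- The positions `i` counted by `N(d)`: `t_i ∉ G_μ` and `t_{i^d} ∉ G_ν`, where `i^d = d⁻¹ i`. -/
def freeSet (μ ν : List ℤ) (d : Perm (Fin n)) : Set (Fin n) :=
  {i | ¬InPosBlock μ i ∧ ¬InPosBlock ν (d⁻¹ i)}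

/-- The coordinate `i` of `t^f d` can be cleared inside the double coset, by a power of `t_i` on
the left or of `t_{d⁻¹ i}` on the right; this lowers the length by `(f i).val`. -/
lemma eq_zero_of_le_len_mul_mul [NeZero r] {f : Fin n → ZMod r}
    (hmin : ∀ g : Grn r n, (∃ a ∈ Gmu r n μ, ∃ b ∈ Gmu r n ν,
      g = a * (inl (Multiplicative.ofAdd f) * inr d) * b) →
        len r n (inl (Multiplicative.ofAdd f) * inr d) ≤ len r n g)
    {i : Fin n} (hi : tGen r n i ∈ Gmu r n μ ∨ tGen r n (d⁻¹ i) ∈ Gmu r n ν) : f i = 0 := by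
  have hupdate : Pi.single i (-f i) + f = Function.update f i 0 := by
    ext j
    rcases eq_or_ne j i with rfl | h <;> simp [*]
  have hcoset : ∃ a ∈ Gmu r n μ, ∃ b ∈ Gmu r n ν,
      inl (Multiplicative.ofAdd (Function.update f i 0)) * inr d =
        a * (inl (Multiplicative.ofAdd f) * inr d) * b := by
    rcases hi with hi | hi
    · refine ⟨_, single_mem_of_tGen_mem hi (-f i), 1, one_mem _, ?_⟩
      rw [mul_one, ← mul_assoc, ← map_mul, ← ofAdd_add, hupdate]
    · refine ⟨1, one_mem _, _, single_mem_of_tGen_mem hi (-f i), ?_⟩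
      rw [one_mul, mul_assoc, inr_mul_inl, act_ofAdd_single, Perm.coe_inv, apply_symm_apply,
        ← mul_assoc, ← map_mul, ← ofAdd_add, add_comm, hupdate]
  have := hmin _ hcoset
  rw [len_inl_mul_inr, len_inl_mul_inr, ← weight_update_zero_add f i] at this
  exact (ZMod.val_eq_zero _).1 (by omega)

lemma le_len_mul_mul [NeZero r] (hμ : (μ.map Int.natAbs).sum = n)
    (hν : (ν.map Int.natAbs).sum = n) (hd : d ∈ DD r n μ ν) {f : Fin n → ZMod r}
    (hf : ∀ i ∉ freeSet μ ν d, f i = 0) {a b : Grn r n} (ha : a ∈ Gmu r n μ)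
    (hb : b ∈ Gmu r n ν) :
    len r n (inl (Multiplicative.ofAdd f) * inr d) ≤
      len r n (a * (inl (Multiplicative.ofAdd f) * inr d) * b) := by
  obtain ⟨haW, ha0⟩ := Gmu_le_blockSubgroup ha
  obtain ⟨hbW, hb0⟩ := Gmu_le_blockSubgroup hb
  rw [len_inl_mul_inr, len_eq]
  gcongr ?_ + ?_
  · set g := (a * (inl (Multiplicative.ofAdd f) * inr d) * b).left
    have hcoord : ∀ j ∈ freeSet μ ν d, Multiplicative.toAdd g (a.right j) = f j := by
      rintro j ⟨hjμ, hjν⟩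
      have h1 : Multiplicative.toAdd a.left (a.right j) = 0 :=
        ha0 _ (by simpa [InPosBlock, haW j] using hjμ)
      have h2 : Multiplicative.toAdd b.left (d.symm j) = 0 := hb0 _ hjν
      simp [g, h1, h2]
    calc weight (Multiplicative.ofAdd f) = ∑ j, (f j).val := rfl
      _ ≤ ∑ j, (Multiplicative.toAdd g (a.right j)).val := Finset.sum_le_sum fun j _ => by
        by_cases hj : j ∈ freeSet μ ν d
        · rw [hcoord j hj]
        · simp [hf j hj]
      _ = weight g := Equiv.sum_comp a.right fun j => (Multiplicative.toAdd g j).val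
  · simp only [mul_right, right_inl, right_inr, one_mul]
    exact invCount_le_invCount_mul_mul (blockIdx_mono hμ) (blockIdx_mono hν)
      (strictMonoOn_inv_of_mem_Dset hμ hd.1)
      (by simpa using strictMonoOn_inv_of_mem_Dset hν hd.2) haW hbW

lemma tPow_mul_inr_injective (w : Perm (Fin n)) :
    Function.Injective fun α : Fin n → Fin r => tPow r n α * inr w := fun α β h =>
  funext fun i => Fin.ext <| by
    simpa [tPow, Nat.mod_eq_of_lt (α i).isLt, Nat.mod_eq_of_lt (β i).isLt] using
      congrArg (fun g : Grn r n => (Multiplicative.toAdd g.left i).val) h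

lemma setOf_minimal_tPow_mul_inr_eq_image [NeZero r] [Nontrivial (ZMod r)]
    (hμ : (μ.map Int.natAbs).sum = n) (hν : (ν.map Int.natAbs).sum = n)
    (hd : d ∈ DD r n μ ν) :
    {x : Grn r n | (∃ α : Fin n → Fin r, x = tPow r n α * inr d) ∧
        (∀ g : Grn r n, (∃ a ∈ Gmu r n μ, ∃ b ∈ Gmu r n ν, g = a * x * b) →
          len r n x ≤ len r n g)} =
      (fun α => tPow r n α * inr d) '' {α | ∀ i ∉ freeSet μ ν d, α i = 0} := by
  ext x
  constructor
  · rintro ⟨⟨α, rfl⟩, hmin⟩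
    refine ⟨α, fun i hi => ?_, rfl⟩
    have hgen : tGen r n i ∈ Gmu r n μ ∨ tGen r n (d⁻¹ i) ∈ Gmu r n ν := by
      rw [tGen_mem_Gmu_iff hμ, tGen_mem_Gmu_iff hν]
      by_contra h
      exact hi (not_or.1 h)
    exact (natCast_val_eq_zero_iff _).1 (eq_zero_of_le_len_mul_mul hmin hgen)
  · rintro ⟨α, hα, rfl⟩
    refine ⟨⟨α, rfl⟩, ?_⟩
    rintro _ ⟨a, ha, b, hb, rfl⟩
    exact le_len_mul_mul hμ hν hd (fun i hi => by simp [hα i hi]) ha hb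

end MinimalElements

theorem stmt6_general (r n : ℕ) (hr : 2 ≤ r) (μ ν : List ℤ)
    (hμ : IsSignedComp n μ) (hν : IsSignedComp n ν)
    (d : Equiv.Perm (Fin n)) (hd : d ∈ DD r n μ ν) :
    Set.ncard {x : Grn r n | (∃ α : Fin n → Fin r, x = tPow r n α * inr d) ∧
        (∀ g : Grn r n, (∃ a ∈ Gmu r n μ, ∃ b ∈ Gmu r n ν, g = a * x * b) →
          len r n x ≤ len r n g)} =
      Nat.card ↥(Tneg r n μ ⊓ (Tneg r n ν).map (MulAut.conj (inr d : Grn r n)).toMonoidHom) ∧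
    Nat.card ↥(Tneg r n μ ⊓ (Tneg r n ν).map (MulAut.conj (inr d : Grn r n)).toMonoidHom) =
      r ^ Set.ncard {i : Fin n | tGen r n i ∉ Gmu r n μ ∧
            (inr d : Grn r n)⁻¹ * tGen r n i * inr d ∉ Gmu r n ν} := by
  have : Fact (1 < r) := ⟨hr⟩
  have : NeZero r := ⟨by omega⟩
  have hfree : {i : Fin n | tGen r n i ∉ Gmu r n μ ∧
      (inr d : Grn r n)⁻¹ * tGen r n i * inr d ∉ Gmu r n ν} = freeSet μ ν d := by
    simp only [inv_inr_mul_tGen_mul_inr, tGen_mem_Gmu_iff hμ.2, tGen_mem_Gmu_iff hν.2]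
    rfl
  have hsub : Tneg r n μ ⊓ (Tneg r n ν).map (MulAut.conj (inr d : Grn r n)).toMonoidHom =
      torusSubgroup r n (freeSet μ ν d) := by
    rw [Tneg_eq hμ.2, Tneg_eq hν.2, torusSubgroup_map_conj, torusSubgroup_inf]
    rfl
  rw [setOf_minimal_tPow_mul_inr_eq_image hμ.2 hν.2 hd,
    Set.ncard_image_of_injective _ (tPow_mul_inr_injective d), hsub,
    card_torusSubgroup, hfree, ← Nat.card_coe_set_eq, Set.coe_ofPred, card_funs_eq_zero_off,
    Nat.card_eq_fintype_card, Fintype.card_fin]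
  exact ⟨rfl, rfl⟩

theorem stmt6 (r n : ℕ) (hr : 2 ≤ r) (hn : 1 ≤ n) (μ ν : List ℤ)
    (hμ : IsSignedComp n μ) (hν : IsSignedComp n ν)
    (d : Equiv.Perm (Fin n)) (hd : d ∈ DD r n μ ν) :
    Set.ncard {x : Grn r n | (∃ α : Fin n → Fin r, x = tPow r n α * inr d) ∧
        (∀ g : Grn r n, (∃ a ∈ Gmu r n μ, ∃ b ∈ Gmu r n ν, g = a * x * b) →
          len r n x ≤ len r n g)} =
      Nat.card ↥(Tneg r n μ ⊓ (Tneg r n ν).map (MulAut.conj (inr d : Grn r n)).toMonoidHom) ∧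
    Nat.card ↥(Tneg r n μ ⊓ (Tneg r n ν).map (MulAut.conj (inr d : Grn r n)).toMonoidHom) =
      r ^ Set.ncard {i : Fin n | tGen r n i ∉ Gmu r n μ ∧
            (inr d : Grn r n)⁻¹ * tGen r n i * inr d ∉ Gmu r n ν} :=
  stmt6_general r n hr μ ν hμ hν d hd

end CycSol
end
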